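/- Let F, G be faces of 𝒜 with F ≺ G strictly in the covector order, and suppose the separation set S(F,G) = {H ∈ 𝒜 : F(H) = −G(H) ≠ 0} is nonempty. Then there exists a face X of 𝒜 with F ≺ X ≺ G strictly in the covector order. -/

import Mathlib

open scoped RealInnerProductSpace Pointwise

variable {V : Type*} [NormedAddCommGroup V] [InnerProductSpace ℝ V] [FiniteDimensional ℝ V]
  {ι : Type*} [Fintype ι]

/-- The (open) complement of the union of the hyperplanes with chosen normals `e i`. -/
def arrComplement (e : ι → V) : Set V := {v | ∀ i, ⟪e i, v⟫ ≠ 0}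

/-- A region of the arrangement: the closure of a connected component of the complement
of the union of the hyperplanes. -/
def IsRegion (e : ι → V) (R : Set V) : Prop :=
  ∃ x ∈ arrComplement e, R = closure (connectedComponentIn (arrComplement e) x)

/-- The positive closed half-space bounded by the hyperplane with normal `e i`. -/
def posHalf (e : ι → V) (i : ι) : Set V := {v | 0 ≤ ⟪e i, v⟫}

/-- The negative closed half-space bounded by the hyperplane with normal `e i`. -/
def negHalf (e : ι → V) (i : ι) : Set V := {v | ⟪e i, v⟫ ≤ 0}

/-- The separation set of two regions: the (indices of) hyperplanes such that the two
regions lie in opposite closed half-spaces. -/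
def sepSet (e : ι → V) (R R' : Set V) : Set ι :=
  {i | (R ⊆ posHalf e i ∧ R' ⊆ negHalf e i) ∨ (R ⊆ negHalf e i ∧ R' ⊆ posHalf e i)}

/-- The order of the poset of regions `PR(𝒜,B)`. -/
def PRle (e : ι → V) (B R R' : Set V) : Prop := sepSet e B R ⊆ sepSet e B R'

/-- Strict order of the poset of regions. -/
def PRlt (e : ι → V) (B R R' : Set V) : Prop := PRle e B R R' ∧ R ≠ R'

/-- Cover relation in the poset of regions. -/
def PRcover (e : ι → V) (B R R' : Set V) : Prop :=
  PRlt e B R R' ∧ ¬ ∃ U, IsRegion e U ∧ PRlt e B R U ∧ PRlt e B U R'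

/-- A face of the arrangement: an intersection of a nonempty collection of regions. -/
def IsFace (e : ι → V) (F : Set V) : Prop :=
  ∃ Rs : Set (Set V), Rs.Nonempty ∧ (∀ R ∈ Rs, IsRegion e R) ∧ F = ⋂₀ Rs

/-- `[m, M]` is the facial interval of the face `F` in the poset of regions:
the regions containing `F` are exactly those between `m` and `M`. -/
def IsFacialInterval (e : ι → V) (B F m M : Set V) : Prop :=
  IsRegion e m ∧ IsRegion e M ∧
    ∀ R, IsRegion e R → (F ⊆ R ↔ (PRle e B m R ∧ PRle e B R M))

/-- The facial weak order `FW(𝒜,B)`: `F ≤ G` iff `m_F ≤ m_G` and `M_F ≤ M_G`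
in the poset of regions. -/
def FWle (e : ι → V) (B F G : Set V) : Prop :=
  ∃ mF MF mG MG, IsFacialInterval e B F mF MF ∧ IsFacialInterval e B G mG MG ∧
    PRle e B mF mG ∧ PRle e B MF MG

/-- Strict facial weak order. -/
def FWlt (e : ι → V) (B F G : Set V) : Prop := FWle e B F G ∧ F ≠ G

/-- Cover relation in the facial weak order. -/
def FWcover (e : ι → V) (B F G : Set V) : Prop :=
  FWlt e B F G ∧ ¬ ∃ X, IsFace e X ∧ FWlt e B F X ∧ FWlt e B X G

/-- Two faces have the same maximal region `M` of their facial intervals. -/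
def SameMax (e : ι → V) (B F G : Set V) : Prop :=
  ∃ m m' M, IsFacialInterval e B F m M ∧ IsFacialInterval e B G m' M

/-- Two faces have the same minimal region `m` of their facial intervals. -/
def SameMin (e : ι → V) (B F G : Set V) : Prop :=
  ∃ m M M', IsFacialInterval e B F m M ∧ IsFacialInterval e B G m M'

/-- The dimension of a face: the dimension of its linear span. -/
noncomputable def fdim (F : Set V) : ℕ := Module.finrank ℝ (Submodule.span ℝ F)

open Classical in
/-- The covector (sign vector) of a face: the sign of `⟪e i, x⟫` for `x` in the
relative interior of the face. -/
noncomputable def covec (e : ι → V) (F : Set V) (i : ι) : SignType :=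
  if ∀ x ∈ intrinsicInterior ℝ F, 0 < ⟪e i, x⟫ then 1
  else if ∀ x ∈ intrinsicInterior ℝ F, ⟪e i, x⟫ < 0 then -1
  else 0

/-- Composition of sign vectors. -/
def scomp (f g : ι → SignType) (i : ι) : SignType := if f i ≠ 0 then f i else g i

/-- The set of roots of the arrangement: the chosen normals and their opposites. -/
def roots (e : ι → V) : Set V := Set.range e ∪ Set.range (fun i => -(e i))

/-- The root inversion set of a face. -/
def rootInv (e : ι → V) (F : Set V) : Set V :=
  {v ∈ roots e | ∃ x ∈ intrinsicInterior ℝ F, ⟪x, v⟫ ≤ 0}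

/-- `H i` is a wall of the region `R`. -/
noncomputable def IsWall (e : ι → V) (R : Set V) (i : ι) : Prop :=
  fdim ({v : V | ⟪e i, v⟫ = 0} ∩ R) = Module.finrank ℝ V - 1

/-- A region is simplicial when the normal vectors of its walls are linearly independent. -/
def IsSimplicialRegion (e : ι → V) (R : Set V) : Prop :=
  LinearIndependent ℝ (fun i : {i : ι // IsWall e R i} => e i.1)

/-- The arrangement is simplicial when all its regions are. -/
def IsSimplicial (e : ι → V) : Prop := ∀ R, IsRegion e R → IsSimplicialRegion e R

/-- The arrangement is essential when the intersection of all its hyperplanes is `{0}`. -/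
def IsEssential (e : ι → V) : Prop := (⋂ i, {v : V | ⟪e i, v⟫ = 0}) = ({0} : Set V)

/-- The poset of regions is a lattice: any two regions have a join and a meet. -/
def PRIsLattice (e : ι → V) (B : Set V) : Prop :=
  ∀ R R', IsRegion e R → IsRegion e R' →
    (∃ J, IsRegion e J ∧ PRle e B R J ∧ PRle e B R' J ∧
      ∀ U, IsRegion e U → PRle e B R U → PRle e B R' U → PRle e B J U) ∧
    (∃ M, IsRegion e M ∧ PRle e B M R ∧ PRle e B M R' ∧
      ∀ U, IsRegion e U → PRle e B U R → PRle e B U R' → PRle e B U M)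

/-!
Regions are the closed chambers `{v | ∀ j, 0 ≤ ⟪e j, x⟫ * ⟪e j, v⟫}`, so faces are convex
cones lying in a closed half-space of every hyperplane, and the covector of a face is the sign
vector of any point of its relative interior. Pick `x` and `y` in the relative interiors of `F`
and `G` and a hyperplane `H i` separating them; the segment from `x` to `y` crosses `H i` at a
point `z`, whose sign vector lies between those of `x` and `y` and vanishes at `i`. For `w` in
the complement and small `δ`, the points `z ± δ • w` lie on the side of `z` of every hyperplane
not containing `z` and on opposite sides of every hyperplane containing it, so the intersection
of their closed chambers is a face with covector the sign vector of `z`.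
-/

section ConvexGeometry

variable {E : Type*} [AddCommGroup E] [Module ℝ E] [TopologicalSpace E]
  [IsTopologicalAddGroup E] [ContinuousSMul ℝ E] {X : Set E} {u v z : E}

theorem exists_lineMap_mem_of_mem_intrinsicInterior (hu : u ∈ intrinsicInterior ℝ X)
    (hv : v ∈ X) : ∃ t > (1 : ℝ), AffineMap.lineMap v u t ∈ X := by
  obtain ⟨y, hy, rfl⟩ := hu
  let f : ℝ → affineSpan ℝ X := fun t =>
    ⟨AffineMap.lineMap v (y : E) t, AffineMap.lineMap_mem t (subset_affineSpan ℝ X hv) y.2⟩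
  have hf : Continuous f := AffineMap.lineMap_continuous.subtype_mk _
  have hf1 : f 1 = y := Subtype.ext (AffineMap.lineMap_apply_one _ _)
  have hmem : ∀ᶠ t in nhdsWithin (1 : ℝ) (Set.Ioi 1),
      f t ∈ interior ((↑) ⁻¹' X : Set (affineSpan ℝ X)) :=
    ((hf.tendsto 1).eventually (isOpen_interior.mem_nhds (hf1 ▸ hy))).filter_mono
      nhdsWithin_le_nhds
  obtain ⟨t, ht, htX⟩ := (hmem.and self_mem_nhdsWithin).exists
  exact ⟨t, htX, show f t ∈ ((↑) ⁻¹' X : Set (affineSpan ℝ X)) from interior_subset ht⟩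

theorem eq_zero_of_mem_intrinsicInterior (f : E →ₗ[ℝ] ℝ)
    (hX : (∀ w ∈ X, 0 ≤ f w) ∨ (∀ w ∈ X, f w ≤ 0)) (hu : u ∈ intrinsicInterior ℝ X)
    (hfu : f u = 0) (hv : v ∈ X) : f v = 0 := by
  obtain ⟨t, ht, hw⟩ := exists_lineMap_mem_of_mem_intrinsicInterior hu hv
  have hfw : f (AffineMap.lineMap v u t) = (1 - t) * f v := by
    rw [AffineMap.lineMap_apply_module', map_add, map_smul, map_sub, hfu, smul_eq_mul]
    ring
  rcases hX with hX | hX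
  · nlinarith [hX _ hw, hX v hv]
  · nlinarith [hX _ hw, hX v hv]

theorem sign_eq_of_mem_intrinsicInterior (f : E →ₗ[ℝ] ℝ)
    (hX : (∀ w ∈ X, 0 ≤ f w) ∨ (∀ w ∈ X, f w ≤ 0)) (hu : u ∈ intrinsicInterior ℝ X)
    (hz : z ∈ X) (hz0 : f z = 0 → ∀ w ∈ X, f w = 0) :
    SignType.sign (f u) = SignType.sign (f z) := by
  have huX := intrinsicInterior_subset hu
  rcases eq_or_ne (f z) 0 with h | h
  · rw [h, hz0 h u huX]
  have hu0 : f u ≠ 0 := fun h0 => h (eq_zero_of_mem_intrinsicInterior f hX hu h0 hz)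
  rcases hX with hX | hX
  · rw [sign_pos ((hX z hz).lt_of_ne' h), sign_pos ((hX u huX).lt_of_ne' hu0)]
  · rw [sign_neg ((hX z hz).lt_of_ne h), sign_neg ((hX u huX).lt_of_ne hu0)]

end ConvexGeometry

theorem sign_le_sign_mul_add_mul {a b α β : ℝ} (hα : 0 < α) (hβ : 0 < β)
    (hba : SignType.sign b ≤ SignType.sign a) :
    SignType.sign b ≤ SignType.sign (α * a + β * b) ∧
      SignType.sign (α * a + β * b) ≤ SignType.sign a := by
  rcases lt_trichotomy a 0 with ha | rfl | ha
  · have hb : b < 0 :=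
      sign_eq_neg_one_iff.1 (SignType.le_neg_one_iff.1 (hba.trans_eq (sign_neg ha)))
    have hc : α * a + β * b < 0 := by
      nlinarith [mul_pos hα (neg_pos.2 ha), mul_pos hβ (neg_pos.2 hb)]
    simp [sign_neg ha, sign_neg hb, sign_neg hc]
  · have hc : SignType.sign (α * 0 + β * b) = SignType.sign b := by simp [sign_mul, sign_pos hβ]
    rw [hc]
    exact ⟨le_rfl, hba⟩
  · refine ⟨?_, (sign_pos ha).symm ▸ SignType.le_one _⟩
    rcases lt_or_ge b 0 with hb | hb
    · exact (sign_neg hb).symm ▸ SignType.neg_one_le _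
    · rw [sign_pos (by nlinarith : 0 < α * a + β * b)]
      exact SignType.le_one _

theorem SignType.eq_one_and_eq_neg_one_of_le_of_eq_neg {s t : SignType} (hts : t ≤ s)
    (hst : s = -t) (hs : s ≠ 0) : s = 1 ∧ t = -1 := by
  decide +revert

section Arrangement

omit [FiniteDimensional ℝ V] [Fintype ι]

def openChamber (e : ι → V) (x : V) : Set V := {v | ∀ j, 0 < ⟪e j, x⟫ * ⟪e j, v⟫}

def closedChamber (e : ι → V) (x : V) : Set V := {v | ∀ j, 0 ≤ ⟪e j, x⟫ * ⟪e j, v⟫}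

variable {e : ι → V} {x : V}

theorem convex_openChamber : Convex ℝ (openChamber e x) :=
  convex_iff_forall_pos.2 fun v hv w hw a b ha hb _ j => by
    rw [inner_add_right, real_inner_smul_right, real_inner_smul_right]
    nlinarith [mul_pos ha (hv j), mul_pos hb (hw j)]

theorem convex_closedChamber : Convex ℝ (closedChamber e x) :=
  fun v hv w hw a b ha hb _ j => by
    rw [inner_add_right, real_inner_smul_right, real_inner_smul_right]
    nlinarith [hv j, hw j, mul_nonneg ha (hv j), mul_nonneg hb (hw j)]

theorem isClosed_closedChamber : IsClosed (closedChamber e x) := by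
  simp only [closedChamber, Set.ofPred_forall]
  exact isClosed_iInter fun j => isClosed_le continuous_const (by fun_prop)

theorem zero_mem_closedChamber : (0 : V) ∈ closedChamber e x := fun j => by simp

theorem openChamber_subset_arrComplement : openChamber e x ⊆ arrComplement e :=
  fun v hv j h0 => by simpa [h0] using hv j

theorem self_mem_openChamber (hx : x ∈ arrComplement e) : x ∈ openChamber e x :=
  fun j => mul_self_pos.2 (hx j)

theorem connectedComponentIn_arrComplement (hx : x ∈ arrComplement e) :
    connectedComponentIn (arrComplement e) x = openChamber e x := by
  refine subset_antisymm (fun v hv j => ?_)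
    (convex_openChamber.isPreconnected.subset_connectedComponentIn (self_mem_openChamber hx)
      openChamber_subset_arrComplement)
  set f : V → ℝ := fun w => ⟪e j, x⟫ * ⟪e j, w⟫
  have himg : IsPreconnected (f '' connectedComponentIn (arrComplement e) x) :=
    isPreconnected_connectedComponentIn.image f (by fun_prop)
  have hzero : (0 : ℝ) ∉ f '' connectedComponentIn (arrComplement e) x := by
    rintro ⟨w, hw, hfw⟩
    exact connectedComponentIn_subset _ _ hw j
      ((mul_eq_zero.1 hfw).resolve_left (hx j))
  by_contra! hfv
  exact hzero (himg.Icc_subset (Set.mem_image_of_mem f hv)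
    (Set.mem_image_of_mem f (mem_connectedComponentIn hx)) ⟨hfv, (mul_self_pos.2 (hx j)).le⟩)

theorem closure_openChamber (hx : x ∈ arrComplement e) :
    closure (openChamber e x) = closedChamber e x := by
  refine subset_antisymm (closure_minimal (fun v hv j => (hv j).le) isClosed_closedChamber)
    fun v hv => ?_
  have hseg : openSegment ℝ x v ⊆ openChamber e x := by
    rintro _ ⟨a, b, ha, hb, hab, rfl⟩ j
    rw [inner_add_right, real_inner_smul_right, real_inner_smul_right]
    nlinarith [hv j, mul_self_pos.2 (hx j)]
  exact closure_mono hseg (segment_subset_closure_openSegment (right_mem_segment ℝ x v))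

theorem isRegion_iff {R : Set V} :
    IsRegion e R ↔ ∃ x ∈ arrComplement e, R = closedChamber e x :=
  exists_congr fun x => and_congr_right fun hx => by
    rw [connectedComponentIn_arrComplement hx, closure_openChamber hx]

theorem closedChamber_subset_posHalf_or_negHalf (hx : x ∈ arrComplement e) (j : ι) :
    closedChamber e x ⊆ posHalf e j ∨ closedChamber e x ⊆ negHalf e j := by
  rcases (hx j).lt_or_gt with hneg | hpos
  · exact Or.inr fun v hv => nonpos_of_mul_nonneg_right (hv j) hneg
  · exact Or.inl fun v hv => nonneg_of_mul_nonneg_right (hv j) hpos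

theorem isFace_closedChamber_inter {p q : V} (hp : p ∈ arrComplement e)
    (hq : q ∈ arrComplement e) : IsFace e (closedChamber e p ∩ closedChamber e q) := by
  refine ⟨{closedChamber e p, closedChamber e q}, Set.insert_nonempty _ _, ?_,
    (Set.sInter_pair _ _).symm⟩
  rintro R (rfl | rfl)
  exacts [isRegion_iff.2 ⟨p, hp, rfl⟩, isRegion_iff.2 ⟨q, hq, rfl⟩]

namespace IsFace

variable {F : Set V} (hF : IsFace e F)
include hF

theorem exists_mem_arrComplement : ∃ w, w ∈ arrComplement e := by
  obtain ⟨Rs, ⟨R, hR⟩, hreg, -⟩ := hF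
  obtain ⟨w, hw, -⟩ := hreg R hR
  exact ⟨w, hw⟩

theorem zero_mem : (0 : V) ∈ F := by
  obtain ⟨Rs, -, hreg, rfl⟩ := hF
  intro R hR
  obtain ⟨x, -, rfl⟩ := isRegion_iff.1 (hreg R hR)
  exact zero_mem_closedChamber

theorem convex : Convex ℝ F := by
  obtain ⟨Rs, -, hreg, rfl⟩ := hF
  refine convex_sInter fun R hR => ?_
  obtain ⟨x, -, rfl⟩ := isRegion_iff.1 (hreg R hR)
  exact convex_closedChamber

theorem subset_posHalf_or_negHalf (j : ι) : F ⊆ posHalf e j ∨ F ⊆ negHalf e j := by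
  obtain ⟨Rs, ⟨R, hR⟩, hreg, rfl⟩ := hF
  obtain ⟨x, hx, rfl⟩ := isRegion_iff.1 (hreg R hR)
  exact (closedChamber_subset_posHalf_or_negHalf hx j).imp
    (Set.sInter_subset_of_mem hR).trans (Set.sInter_subset_of_mem hR).trans

end IsFace

theorem covec_eq_sign_of_mem_intrinsicInterior {X : Set V}
    (hX : ∀ j, X ⊆ posHalf e j ∨ X ⊆ negHalf e j) (hx : x ∈ intrinsicInterior ℝ X) (j : ι) :
    covec e X j = SignType.sign ⟪e j, x⟫ := by
  have hsign : ∀ u ∈ intrinsicInterior ℝ X, SignType.sign ⟪e j, u⟫ = SignType.sign ⟪e j, x⟫ :=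
    fun u hu => sign_eq_of_mem_intrinsicInterior (innerₗ V (e j)) (hX j) hu
      (intrinsicInterior_subset hx) fun h0 _ => eq_zero_of_mem_intrinsicInterior _ (hX j) hx h0
  unfold covec
  split_ifs with hpos hneg
  · exact (sign_pos (hpos x hx)).symm
  · exact (sign_neg (hneg x hx)).symm
  · rcases lt_trichotomy ⟪e j, x⟫ 0 with h | h | h
    · exact absurd (fun u hu => sign_eq_neg_one_iff.1 ((hsign u hu).trans (sign_neg h))) hneg
    · rw [h, sign_zero]
    · exact absurd (fun u hu => sign_eq_one_iff.1 ((hsign u hu).trans (sign_pos h))) hpos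

theorem covec_eq_sign_of_mem [FiniteDimensional ℝ V] {X : Set V} {z : V} (hXc : Convex ℝ X)
    (hX : ∀ j, X ⊆ posHalf e j ∨ X ⊆ negHalf e j) (hz : z ∈ X)
    (hz0 : ∀ j, ⟪e j, z⟫ = 0 → ∀ w ∈ X, ⟪e j, w⟫ = 0) (j : ι) :
    covec e X j = SignType.sign ⟪e j, z⟫ := by
  obtain ⟨x, hx⟩ := Set.Nonempty.intrinsicInterior hXc ⟨z, hz⟩
  rw [covec_eq_sign_of_mem_intrinsicInterior hX hx]
  exact sign_eq_of_mem_intrinsicInterior (innerₗ V (e j)) (hX j) hx hz (hz0 j)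

theorem eventually_forall_mul_inner_add_smul_pos [Fintype ι] (e : ι → V) (z w : V) :
    ∀ᶠ s in nhds (0 : ℝ), ∀ j, ⟪e j, z⟫ ≠ 0 → 0 < ⟪e j, z⟫ * ⟪e j, z + s • w⟫ := by
  refine Filter.eventually_all.2 fun j => ?_
  by_cases hj : ⟪e j, z⟫ = 0
  · exact .of_forall fun _ h => absurd hj h
  have hcont : Continuous fun s : ℝ => ⟪e j, z⟫ * ⟪e j, z + s • w⟫ := by fun_prop
  have h0 : 0 < ⟪e j, z⟫ * ⟪e j, z + (0 : ℝ) • w⟫ := by simpa using mul_self_pos.2 hj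
  exact ((hcont.tendsto 0).eventually_const_lt h0).mono fun _ h _ => h

theorem add_smul_mem_arrComplement {z w : V} {s : ℝ} (hw : w ∈ arrComplement e) (hs : s ≠ 0)
    (hz : ∀ j, ⟪e j, z⟫ ≠ 0 → 0 < ⟪e j, z⟫ * ⟪e j, z + s • w⟫) :
    z + s • w ∈ arrComplement e := by
  intro j
  by_cases hj : ⟪e j, z⟫ = 0
  · simpa [inner_add_right, real_inner_smul_right, hj] using And.intro hs (hw j)
  · exact right_ne_zero_of_mul (hz j hj).ne'

theorem exists_isFace_covec_eq_sign [Fintype ι] [FiniteDimensional ℝ V] {w : V}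
    (hw : w ∈ arrComplement e) (z : V) :
    ∃ X, IsFace e X ∧ ∀ j, covec e X j = SignType.sign ⟪e j, z⟫ := by
  obtain ⟨ε, hε, hnear⟩ :=
    Metric.eventually_nhds_iff.1 (eventually_forall_mul_inner_add_smul_pos e z w)
  have hδ : ∀ j, ⟪e j, z⟫ ≠ 0 → 0 < ⟪e j, z⟫ * ⟪e j, z + (ε / 2) • w⟫ :=
    hnear (by rw [Real.dist_eq, sub_zero, abs_of_pos (half_pos hε)]; linarith)
  have hδ' : ∀ j, ⟪e j, z⟫ ≠ 0 → 0 < ⟪e j, z⟫ * ⟪e j, z + (-(ε / 2)) • w⟫ :=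
    hnear (by rw [Real.dist_eq, sub_zero, abs_neg, abs_of_pos (half_pos hε)]; linarith)
  have hp := add_smul_mem_arrComplement hw (half_pos hε).ne' hδ
  have hq := add_smul_mem_arrComplement hw (neg_ne_zero.2 (half_pos hε).ne') hδ'
  have hXface := isFace_closedChamber_inter hp hq
  refine ⟨_, hXface, covec_eq_sign_of_mem hXface.convex hXface.subset_posHalf_or_negHalf ?_ ?_⟩
  · have hmem : ∀ s : ℝ, (∀ j, ⟪e j, z⟫ ≠ 0 → 0 < ⟪e j, z⟫ * ⟪e j, z + s • w⟫) →
        z ∈ closedChamber e (z + s • w) := fun s hs j => by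
      by_cases hj : ⟪e j, z⟫ = 0
      · simp [hj]
      · exact (mul_comm (⟪e j, z⟫) _ ▸ hs j hj).le
    exact ⟨hmem _ hδ, hmem _ hδ'⟩
  · rintro j hj v ⟨hvp, hvq⟩
    have h₁ := hvp j
    have h₂ := hvq j
    simp only [inner_add_right, real_inner_smul_right, hj, zero_add] at h₁ h₂
    have h : ε / 2 * ⟪e j, w⟫ * ⟪e j, v⟫ = 0 := by linarith
    exact (mul_eq_zero.1 h).resolve_left (mul_ne_zero (half_pos hε).ne' (hw j))

end Arrangement

theorem stmt10_general (e : ι → V) (F G : Set V) (hF : IsFace e F) (hG : IsFace e G)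
    (hle : ∀ i, covec e G i ≤ covec e F i)
    (hsep : ∃ i, covec e F i = -(covec e G i) ∧ covec e F i ≠ 0) :
    ∃ X, IsFace e X ∧ X ≠ F ∧ X ≠ G ∧
      (∀ i, covec e X i ≤ covec e F i) ∧ (∀ i, covec e G i ≤ covec e X i) := by
  obtain ⟨i, hsep⟩ := hsep
  obtain ⟨hFi, hGi⟩ := SignType.eq_one_and_eq_neg_one_of_le_of_eq_neg (hle i) hsep.1 hsep.2
  obtain ⟨x, hx⟩ := Set.Nonempty.intrinsicInterior hF.convex ⟨0, hF.zero_mem⟩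
  obtain ⟨y, hy⟩ := Set.Nonempty.intrinsicInterior hG.convex ⟨0, hG.zero_mem⟩
  have hcovF := covec_eq_sign_of_mem_intrinsicInterior hF.subset_posHalf_or_negHalf hx
  have hcovG := covec_eq_sign_of_mem_intrinsicInterior hG.subset_posHalf_or_negHalf hy
  have hxi : 0 < ⟪e i, x⟫ := sign_eq_one_iff.1 ((hcovF i).symm.trans hFi)
  have hyi : ⟪e i, y⟫ < 0 := sign_eq_neg_one_iff.1 ((hcovG i).symm.trans hGi)
  -- the point where the segment from `x` to `y` crosses the hyperplane `H i`
  obtain ⟨w, hw⟩ := hF.exists_mem_arrComplement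
  obtain ⟨X, hX, hcovX⟩ := exists_isFace_covec_eq_sign hw ((-⟪e i, y⟫) • x + ⟪e i, x⟫ • y)
  simp only [inner_add_right, real_inner_smul_right] at hcovX
  have hXi : covec e X i = 0 := by
    rw [hcovX, mul_comm ⟪e i, x⟫, neg_mul, neg_add_cancel, sign_zero]
  have hmid := fun j => sign_le_sign_mul_add_mul (neg_pos.2 hyi) hxi
    ((hcovG j).symm.trans_le ((hle j).trans_eq (hcovF j)))
  refine ⟨X, hX, ?_, ?_, fun j => ?_, fun j => ?_⟩
  · rintro rfl
    simp [hXi] at hFi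
  · rintro rfl
    simp [hXi] at hGi
  · rw [hcovX, hcovF]
    exact (hmid j).2
  · rw [hcovX, hcovG]
    exact (hmid j).1

/-- If `F ≺ G` strictly in the covector order and the separation set of `F` and `G`
is nonempty, then there is a face strictly between `F` and `G` in the covector order. -/
theorem stmt10 (e : ι → V) (hne : ∀ i, e i ≠ 0) (B : Set V)
    (hB : IsRegion e B) (hBpos : ∀ i, B ⊆ posHalf e i)
    (F G : Set V) (hF : IsFace e F) (hG : IsFace e G)
    (hle : ∀ i, covec e G i ≤ covec e F i) (hFG : F ≠ G)
    (hsep : ∃ i, covec e F i = -(covec e G i) ∧ covec e F i ≠ 0) :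
    ∃ X, IsFace e X ∧ X ≠ F ∧ X ≠ G ∧
      (∀ i, covec e X i ≤ covec e F i) ∧ (∀ i, covec e G i ≤ covec e X i) :=
  stmt10_general e F G hF hG hle hsep
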